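/- arXiv:1101.4739 — 2 statements merged into one kernel-verified Lean document; each statement's English description precedes it below -/
import Mathlib

section
/- A labelled space (E,𝓛,𝓑) is disagreeable if and only if [v]_l is disagreeable for every v ∈ E^0 and every l ≥ 1. -/
open scoped BigOperators

/-- The `n`-fold concatenation power of a word. -/
def wpow {A : Type*} (β : List A) : ℕ → List A
  | 0 => []
  | n + 1 => β ++ wpow β n

/-- A word is simple if it is not a power of a strictly shorter word. -/
def SimpleWord {A : Type*} (β : List A) : Prop :=
  β ≠ [] ∧ ¬ ∃ (δ : List A) (n : ℕ), δ ≠ [] ∧ δ.length < β.length ∧ 1 ≤ n ∧ β = wpow δ n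

/-- The initial segment `x_{[1,N]}` of an infinite word. -/
def finTake {A : Type*} (x : ℕ → A) (N : ℕ) : List A := List.ofFn (fun i : Fin N => x i)

/-- `x = β^∞`, the periodic infinite word with period `β`. -/
def isPowInf {A : Type*} (β : List A) (x : ℕ → A) : Prop :=
  ∃ h : β ≠ [], ∀ n : ℕ,
    x n = β.get ⟨n % β.length, Nat.mod_lt n (List.length_pos_of_ne_nil h)⟩

/-- A labelled graph: a directed graph together with a surjective labelling of edges. -/
structure LabelledGraph (V : Type*) (Ed : Type*) (A : Type*) where
  src : Ed → V
  rng : Ed → V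
  lbl : Ed → A
  lbl_surj : Function.Surjective lbl

/-- A finite path (of length ≥ 1) in a directed graph. -/
structure LabelledGraph.GPath {V Ed A : Type*} (G : LabelledGraph V Ed A) where
  edges : List Ed
  ne : edges ≠ []
  chain : edges.Chain' (fun e f => G.rng e = G.src f)

/-- An infinite path in a directed graph. -/
structure LabelledGraph.GInfPath {V Ed A : Type*} (G : LabelledGraph V Ed A) where
  edges : ℕ → Ed
  chain : ∀ n, G.rng (edges n) = G.src (edges (n + 1))

namespace LabelledGraph

variable {V Ed A : Type*}

def GPath.src {G : LabelledGraph V Ed A} (p : G.GPath) : V := G.src (p.edges.head p.ne)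

def GPath.rng {G : LabelledGraph V Ed A} (p : G.GPath) : V := G.rng (p.edges.getLast p.ne)

def GPath.label {G : LabelledGraph V Ed A} (p : G.GPath) : List A := p.edges.map G.lbl

def GPath.len {G : LabelledGraph V Ed A} (p : G.GPath) : ℕ := p.edges.length

def GInfPath.src {G : LabelledGraph V Ed A} (q : G.GInfPath) : V := G.src (q.edges 0)

def GInfPath.label {G : LabelledGraph V Ed A} (q : G.GInfPath) : ℕ → A :=
  fun n => G.lbl (q.edges n)

variable (G : LabelledGraph V Ed A)

/-- `α ∈ 𝓛(E^{≥1})`: `α` is the label of some finite path. -/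
def IsLabelled (α : List A) : Prop := ∃ p : G.GPath, p.label = α

/-- `s(α)`, the set of sources of paths labelled `α`. -/
def srcSet (α : List A) : Set V := { v | ∃ p : G.GPath, p.label = α ∧ p.src = v }

/-- `r(α)`, the set of ranges of paths labelled `α`. -/
def rngSet (α : List A) : Set V := { v | ∃ p : G.GPath, p.label = α ∧ p.rng = v }

/-- The relative range `r(S,α)` of `α` with respect to `S`. -/
def relRange (S : Set V) (α : List A) : Set V :=
  { v | ∃ p : G.GPath, p.label = α ∧ p.src ∈ S ∧ p.rng = v }

/-- `x ∈ 𝓛(E^∞)`: the infinite word `x` is the label of some infinite path. -/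
def IsInfLabelled (x : ℕ → A) : Prop := ∃ q : G.GInfPath, q.label = x

/-- `s(x)` for an infinite labelled path `x`. -/
def infSrc (x : ℕ → A) : Set V := { v | ∃ q : G.GInfPath, q.label = x ∧ q.src = v }

/-- `𝓛(SE^1)`: labels of edges with source in `S`. -/
def labelsFrom (S : Set V) : Set A := { a | ∃ e : Ed, G.src e ∈ S ∧ G.lbl e = a }

/-- `𝓛(E^1S)`: labels of edges with range in `S`. -/
def labelsInto (S : Set V) : Set A := { a | ∃ e : Ed, G.rng e ∈ S ∧ G.lbl e = a }

/-- `𝓛(SE^n)`: labels of paths of length `n` with source in `S`. -/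
def nLabelsFrom (S : Set V) (n : ℕ) : Set (List A) :=
  { α | ∃ p : G.GPath, p.label = α ∧ p.src ∈ S ∧ p.len = n }

/-- `𝓛(E^{≤l}v)`: labels of paths of length at most `l` with range `v`. -/
def labelsToVtx (l : ℕ) (v : V) : Set (List A) :=
  { α | ∃ p : G.GPath, p.label = α ∧ p.len ≤ l ∧ p.rng = v }

/-- The generalized vertex `[v]_l`. -/
def genVertex (l : ℕ) (v : V) : Set V := { w | G.labelsToVtx l w = G.labelsToVtx l v }

/-- `Ē^{0,-}`: the collection of all finite unions of generalized vertices. -/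
def barE : Set (Set V) :=
  { S | ∃ (l : ℕ) (F : Finset V), 1 ≤ l ∧ S = ⋃ v ∈ F, G.genVertex l v }

/-- An accommodating set for `(E,𝓛)`. -/
structure Accommodating (B : Set (Set V)) : Prop where
  empty_mem : ∅ ∈ B
  relRange_mem : ∀ S ∈ B, ∀ α : List A, G.IsLabelled α → G.relRange S α ∈ B
  inter_mem : ∀ S ∈ B, ∀ T ∈ B, S ∩ T ∈ B
  union_mem : ∀ S ∈ B, ∀ T ∈ B, S ∪ T ∈ B
  rng_mem : ∀ α : List A, G.IsLabelled α → G.rngSet α ∈ B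

/-- `𝓔^{0,-}`: the smallest accommodating set for `(E,𝓛)`. -/
def smallestAcc : Set (Set V) :=
  { S | ∀ B : Set (Set V), G.Accommodating B → S ∈ B }

/-- The labelled space `(E,𝓛,B)` is weakly left-resolving. -/
def WeaklyLeftResolving (B : Set (Set V)) : Prop :=
  ∀ S ∈ B, ∀ T ∈ B, ∀ α : List A, G.IsLabelled α →
    G.relRange S α ∩ G.relRange T α = G.relRange (S ∩ T) α

/-- Standing assumptions: no sinks, set-finite, receiver set-finite, and
edges are determined by source, range and label. -/
structure StandingAssumptions (B : Set (Set V)) : Prop where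
  no_sinks : ∀ v : V, ∃ e : Ed, G.src e = v
  set_finite : ∀ S ∈ B, (G.labelsFrom S).Finite
  receiver_set_finite : ∀ S ∈ B, (G.labelsInto S).Finite
  edge_eq : ∀ e f : Ed, G.src e = G.src f → G.rng e = G.rng f → G.lbl e = G.lbl f → e = f

/-- `(E,𝓛,B)` is strongly cofinal. -/
def StronglyCofinal : Prop :=
  ∀ x : ℕ → A, G.IsInfLabelled x → ∀ l : ℕ, 1 ≤ l → ∀ v : V, ∀ w ∈ G.infSrc x,
    ∃ N : ℕ, 1 ≤ N ∧ ∃ (m : ℕ) (lds : Fin m → List A),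
      (∀ i, G.IsLabelled (lds i)) ∧
      G.relRange (G.genVertex 1 w) (finTake x N) ⊆ ⋃ i, G.relRange (G.genVertex l v) (lds i)

/-- `(E,𝓛,B)` is `l`-cofinal. -/
def LCofinal (l : ℕ) : Prop :=
  ∀ x : ℕ → A, G.IsInfLabelled x → ∀ v : V, ∀ w ∈ G.infSrc x,
    ∃ d : ℕ, l ≤ d ∧ ∃ N : ℕ, 1 ≤ N ∧ ∃ (m : ℕ) (lds : Fin m → List A),
      (∀ i, G.IsLabelled (lds i)) ∧
      G.relRange (G.genVertex d w) (finTake x N) ⊆ ⋃ i, G.relRange (G.genVertex l v) (lds i)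

/-- `(E,𝓛,B)` is cofinal: `l`-cofinal for all `l ≥ L`, for some `L > 0`. -/
def Cofinal : Prop := ∃ L : ℕ, 0 < L ∧ ∀ l : ℕ, L ≤ l → G.LCofinal l

/-- `α` is agreeable for `[v]_l` (the condition only involves `l`):
`α = βα' = α'γ` with `|β| = |γ| ≤ l`. -/
def Agreeable (l : ℕ) (α : List A) : Prop :=
  ∃ β α' γ : List A, G.IsLabelled β ∧ G.IsLabelled α' ∧ G.IsLabelled γ ∧
    β.length = γ.length ∧ β.length ≤ l ∧ α = β ++ α' ∧ α = α' ++ γ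

/-- `α` (a labelled path with `s(α) ∩ [v]_l ≠ ∅`) is disagreeable for `[v]_l`. -/
def DisagreeablePath (l : ℕ) (v : V) (α : List A) : Prop :=
  G.IsLabelled α ∧ (G.srcSet α ∩ G.genVertex l v).Nonempty ∧ ¬ G.Agreeable l α

/-- The generalized vertex `[v]_l` is disagreeable. -/
def DisagreeableVtx (l : ℕ) (v : V) : Prop :=
  ∃ N : ℕ, 0 < N ∧ ∀ n : ℕ, N < n →
    ∃ α : List A, n ≤ α.length ∧ G.DisagreeablePath l v α

/-- The labelled space is disagreeable. -/
def DisagreeableSpace : Prop :=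
  ∀ v : V, ∃ L : ℕ, 0 < L ∧ ∀ l : ℕ, L < l → G.DisagreeableVtx l v

/-- A representation of the labelled space `(E,𝓛,B)` in a C*-algebra `𝔄`. -/
structure Rep (B : Set (Set V)) (𝔄 : Type*) [NonUnitalCStarAlgebra 𝔄] where
  p : Set V → 𝔄
  s : A → 𝔄
  p_empty : p ∅ = 0
  p_proj : ∀ S ∈ B, star (p S) = p S ∧ p S * p S = p S
  s_pisom : ∀ a : A, s a * star (s a) * s a = s a
  p_inter : ∀ S ∈ B, ∀ T ∈ B, p (S ∩ T) = p S * p T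
  p_union : ∀ S ∈ B, ∀ T ∈ B, p (S ∪ T) = p S + p T - p (S ∩ T)
  p_s : ∀ S ∈ B, ∀ a : A, p S * s a = s a * p (G.relRange S [a])
  s_star_s : ∀ a : A, star (s a) * s a = p (G.rngSet [a])
  s_orth : ∀ a b : A, a ≠ b → star (s a) * s b = 0
  p_sum : ∀ S ∈ B, ∀ h : (G.labelsFrom S).Finite, (G.labelsFrom S).Nonempty →
    p S = ∑ a ∈ h.toFinset, s a * p (G.relRange S [a]) * star (s a)

variable {G}

/-- `s_α = s_{α_1} ⋯ s_{α_n}` for a word `α`. -/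
def Rep.sWord {B : Set (Set V)} {𝔄 : Type*} [NonUnitalCStarAlgebra 𝔄]
    (ρ : G.Rep B 𝔄) : List A → 𝔄
  | [] => 0
  | a :: rest => rest.foldl (fun x b => x * ρ.s b) (ρ.s a)

/-- The C*-algebra `𝔄` is generated by the representation `ρ`. -/
def Rep.Generates {B : Set (Set V)} {𝔄 : Type*} [NonUnitalCStarAlgebra 𝔄]
    (ρ : G.Rep B 𝔄) : Prop :=
  closure (↑(NonUnitalStarAlgebra.adjoin ℂ
    (Set.range ρ.s ∪ ρ.p '' B)) : Set 𝔄) = Set.univ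

/-- The representation `ρ` is universal. -/
def Rep.Universal {B : Set (Set V)} {𝔄 : Type*} [NonUnitalCStarAlgebra 𝔄]
    (ρ : G.Rep B 𝔄) : Prop :=
  ∀ (C : Type*) [NonUnitalCStarAlgebra C], ∀ ρ' : G.Rep B C,
    ∃ φ : 𝔄 →⋆ₙₐ[ℂ] C, (∀ a : A, φ (ρ.s a) = ρ'.s a) ∧ ∀ S ∈ B, φ (ρ.p S) = ρ'.p S

end LabelledGraph

/-- A C*-algebra is simple if its only closed two-sided ideals are `{0}` and the
whole algebra. -/
def IsSimpleCStarAlgebra (𝔄 : Type*) [NonUnitalCStarAlgebra 𝔄] : Prop :=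
  ∀ I : TwoSidedIdeal 𝔄, IsClosed (I : Set 𝔄) →
    (I : Set 𝔄) = {0} ∨ (I : Set 𝔄) = Set.univ

/-! Disagreeability of `[v]_l` only gets easier as `l` decreases: for `l ≤ l'` the class
`[v]_{l'}` refines `[v]_l`, since `𝓛(E^{≤l}w)` is recovered from `𝓛(E^{≤l'}w)` by discarding the
labels longer than `l`, and an agreeable decomposition `α = βα' = α'γ` with `|β| ≤ l` also has
`|β| ≤ l'`. So "for all `l` beyond some `L`" and "for all `l ≥ 1`" say the same thing. -/

namespace LabelledGraph

variable {V Ed A : Type*} {G : LabelledGraph V Ed A}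

theorem GPath.len_eq_length_label (p : G.GPath) : p.len = p.label.length := by
  simp [GPath.len, GPath.label]

theorem mem_labelsToVtx_iff_of_le {l l' : ℕ} (h : l ≤ l') (u : V) (α : List A) :
    α ∈ G.labelsToVtx l u ↔ α ∈ G.labelsToVtx l' u ∧ α.length ≤ l := by
  constructor
  · rintro ⟨p, rfl, hlen, hrng⟩
    exact ⟨⟨p, rfl, hlen.trans h, hrng⟩, p.len_eq_length_label ▸ hlen⟩
  · rintro ⟨⟨p, rfl, -, hrng⟩, hlen⟩
    exact ⟨p, rfl, p.len_eq_length_label ▸ hlen, hrng⟩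

theorem genVertex_antitone (v : V) : Antitone (G.genVertex · v) := by
  intro l l' h w (hw : G.labelsToVtx l' w = G.labelsToVtx l' v)
  show G.labelsToVtx l w = G.labelsToVtx l v
  ext α
  rw [mem_labelsToVtx_iff_of_le h, mem_labelsToVtx_iff_of_le h, hw]

theorem agreeable_monotone (α : List A) : Monotone (G.Agreeable · α) := by
  rintro l l' h ⟨β, α', γ, hβ, hα', hγ, hlen, hβl, hleft, hright⟩
  exact ⟨β, α', γ, hβ, hα', hγ, hlen, hβl.trans h, hleft, hright⟩

theorem disagreeablePath_antitone (v : V) (α : List A) :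
    Antitone (G.DisagreeablePath · v α) := by
  rintro l l' h ⟨hα, ⟨w, hws, hwv⟩, hnag⟩
  exact ⟨hα, ⟨w, hws, genVertex_antitone v h hwv⟩, fun hag => hnag (agreeable_monotone α h hag)⟩

theorem disagreeableVtx_antitone (v : V) : Antitone (G.DisagreeableVtx · v) := by
  rintro l l' h ⟨N, hN, hlong⟩
  refine ⟨N, hN, fun n hn => ?_⟩
  obtain ⟨α, hlen, hα⟩ := hlong n hn
  exact ⟨α, hlen, disagreeablePath_antitone v α h hα⟩

end LabelledGraph

theorem disagreeableSpace_iff_general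
    {V Ed A : Type*} (G : LabelledGraph V Ed A) :
    G.DisagreeableSpace ↔ ∀ v : V, ∀ l : ℕ, 1 ≤ l → G.DisagreeableVtx l v := by
  constructor
  · intro hG v l _
    obtain ⟨L, -, hL⟩ := hG v
    exact LabelledGraph.disagreeableVtx_antitone v (le_max_left l (L + 1)) (hL _ (by omega))
  · intro hG v
    exact ⟨1, one_pos, fun l hl => hG v l hl.le⟩

/-- A labelled space is disagreeable iff `[v]_l` is disagreeable
for every vertex `v` and every `l ≥ 1`. -/
theorem disagreeableSpace_iff
    {V Ed A : Type*} (G : LabelledGraph V Ed A)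
    (B : Set (Set V)) (hacc : G.Accommodating B) :
    G.DisagreeableSpace ↔ ∀ v : V, ∀ l : ℕ, 1 ≤ l → G.DisagreeableVtx l v :=
  disagreeableSpace_iff_general G
end

section
/- Let (E,𝓛,Ē^{0,-}) be a weakly left-resolving labelled space, where Ē^{0,-} is the set of all finite unions of generalized vertices, and let v ∈ E^0. Then {v} ∈ Ē^{0,-} if and only if [v]_l = {v} for some l ≥ 1. -/
open scoped BigOperators

/-! For a fixed level `l`, the generalized vertices `[w]_l` are the classes of an equivalence
relation on `E^0`, so a union of them that contains `v` contains all of `[v]_l`. Hence `{v}` is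
such a union exactly when `[v]_l = {v}`. -/

namespace LabelledGraph

variable {V Ed A : Type*} (G : LabelledGraph V Ed A)

theorem self_mem_genVertex (l : ℕ) (v : V) : v ∈ G.genVertex l v := rfl

variable {G}

theorem genVertex_eq_of_mem {l : ℕ} {v w : V} (h : w ∈ G.genVertex l v) :
    G.genVertex l w = G.genVertex l v :=
  Set.ext fun _ => show _ = _ ↔ _ = _ by rw [h]

theorem genVertex_subset_of_mem_biUnion {l : ℕ} {v : V} {s : Set V}
    (hv : v ∈ ⋃ w ∈ s, G.genVertex l w) : G.genVertex l v ⊆ ⋃ w ∈ s, G.genVertex l w := by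
  obtain ⟨w, hws, hvw⟩ := Set.mem_iUnion₂.mp hv
  rw [genVertex_eq_of_mem hvw]
  exact Set.subset_biUnion_of_mem hws

end LabelledGraph

theorem singleton_mem_barE_iff_general
    {V Ed A : Type*} (G : LabelledGraph V Ed A)
    (v : V) :
    ({v} : Set V) ∈ G.barE ↔ ∃ l : ℕ, 1 ≤ l ∧ G.genVertex l v = {v} := by
  constructor
  · rintro ⟨l, F, hl, hF⟩
    have hv : v ∈ ⋃ w ∈ (F : Set V), G.genVertex l w := hF ▸ rfl
    refine ⟨l, hl, subset_antisymm ?_ (Set.singleton_subset_iff.2 (G.self_mem_genVertex l v))⟩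
    rw [hF]
    exact G.genVertex_subset_of_mem_biUnion hv
  · rintro ⟨l, hl, hv⟩
    exact ⟨l, {v}, hl, by simp [hv]⟩

/-- For a weakly left-resolving labelled space `(E,𝓛,Ē^{0,-})`:
`{v} ∈ Ē^{0,-}` iff `[v]_l = {v}` for some `l ≥ 1`. -/
theorem singleton_mem_barE_iff
    {V Ed A : Type*} (G : LabelledGraph V Ed A)
    (hacc : G.Accommodating G.barE)
    (hwlr : G.WeaklyLeftResolving G.barE)
    (v : V) :
    ({v} : Set V) ∈ G.barE ↔ ∃ l : ℕ, 1 ≤ l ∧ G.genVertex l v = {v} :=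
  singleton_mem_barE_iff_general G v
end
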